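/- Fix an integer p ≥ 1, real parameters (β_q)_{q≥1} with only finitely many nonzero, h ∈ ℝ, and let β_p' > β_p and γ > 0. Suppose that for each x ∈ {β_p − γ, β_p, β_p', β_p' + γ} the free energy F_N(x) (the free energy of the mixed model in which the coefficient β_p of H_p is replaced by x) converges as N → ∞ to a limit P(x). Then limsup_{N→∞} N^{−1} E⟨|H_p(σ) − ⟨H_p(σ)⟩_{β_p}|⟩_{β_p} ≤ 8·((P(β_p'+γ) − P(β_p'))/γ − (P(β_p) − P(β_p−γ))/γ). -/

import Mathlib

open MeasureTheory ProbabilityTheory Filter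

noncomputable section

/-- A spin configuration on `N` sites; `true ↦ +1`, `false ↦ -1`. -/
abbrev Config (N : ℕ) := Fin N → Bool

/-- The spin value of a site. -/
def spin (b : Bool) : ℝ := if b then 1 else -1

variable {Ω : Type*} [MeasurableSpace Ω]

/-- The `p`-spin Hamiltonian
`H_p(σ) = N^{-(p-1)/2} ∑_{i₁,…,i_p} g_{i₁,…,i_p} σ_{i₁}⋯σ_{i_p}`. -/
def Hp (N p : ℕ) (g : (Fin p → Fin N) → Ω → ℝ) (σ : Config N) (ω : Ω) : ℝ :=
  (N : ℝ) ^ (-(((p : ℝ) - 1) / 2)) *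
    ∑ i : Fin p → Fin N, g i ω * ∏ k, spin (σ (i k))

/-- The Boltzmann weight `exp(∑_q β_q H_q(σ) + h ∑_i σ_i)`. -/
def weight (N : ℕ) (β : ℕ → ℝ) (h : ℝ)
    (g : (q : ℕ) → (Fin q → Fin N) → Ω → ℝ) (σ : Config N) (ω : Ω) : ℝ :=
  Real.exp ((∑ᶠ q, β q * Hp N q (g q) σ ω) + h * ∑ i, spin (σ i))

/-- The partition function `Z_N`. -/
def Zpart (N : ℕ) (β : ℕ → ℝ) (h : ℝ)
    (g : (q : ℕ) → (Fin q → Fin N) → Ω → ℝ) (ω : Ω) : ℝ :=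
  ∑ σ : Config N, weight N β h g σ ω

/-- The Gibbs measure `G_N(σ)`. -/
def gibbs (N : ℕ) (β : ℕ → ℝ) (h : ℝ)
    (g : (q : ℕ) → (Fin q → Fin N) → Ω → ℝ) (σ : Config N) (ω : Ω) : ℝ :=
  weight N β h g σ ω / Zpart N β h g ω

/-- The Gibbs average `⟨f⟩` of a (possibly random) function of `n` replicas. -/
def gibbsAvg (N : ℕ) (β : ℕ → ℝ) (h : ℝ)
    (g : (q : ℕ) → (Fin q → Fin N) → Ω → ℝ) (n : ℕ)
    (f : (Fin n → Config N) → Ω → ℝ) (ω : Ω) : ℝ :=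
  ∑ σs : Fin n → Config N, f σs ω * ∏ l, gibbs N β h g (σs l) ω

/-- The overlap `R_{1,2}` of two configurations. -/
def overlapR (N : ℕ) (σ τ : Config N) : ℝ :=
  (N : ℝ)⁻¹ * ∑ i, spin (σ i) * spin (τ i)

/-- The random free energy `ψ_N = N⁻¹ log Z_N`. -/
def psiFE (N : ℕ) (β : ℕ → ℝ) (h : ℝ)
    (g : (q : ℕ) → (Fin q → Fin N) → Ω → ℝ) (ω : Ω) : ℝ :=
  (N : ℝ)⁻¹ * Real.log (Zpart N β h g ω)

/-- The disorder of the mixed model, for all `p`, is an i.i.d. standard Gaussian family. -/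
def IsGaussianDisorder (N : ℕ) (g : (q : ℕ) → (Fin q → Fin N) → Ω → ℝ)
    (μ : Measure Ω) : Prop :=
  (∀ q (i : Fin q → Fin N), Measurable (g q i)) ∧
  (∀ q (i : Fin q → Fin N), Measure.map (g q i) μ = gaussianReal 0 1) ∧
  iIndepFun
    (fun qi : Σ q : ℕ, (Fin q → Fin N) => g qi.1 qi.2) μ

end

/-! For fixed disorder, `t ↦ log Z(t)`, with `t` in place of `β_p`, is convex with derivative
the Gibbs mean `m(t) = ⟨H_p⟩_t`: Jensen for `exp` gives the tangent line inequality
`log Z(t) + s m(t) ≤ log Z(t + s)`. Hence `m(β_p)` lies between the left secant slope over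
`[β_p - γ, β_p]` and the right one over `[β_p', β_p' + γ]`. The mean absolute deviation is
`⟨|H_p - m|⟩ = 2 ⟨(H_p - m)⁺⟩`, and `s y⁺ ≤ log (1 + e^{s y})` with Jensen for `log` bounds
`s ⟨(H_p - m)⁺⟩` by `log 2 + log ⟨e^{s (H_p - m)}⟩`. For `s = β_p' + γ - β_p` this exponential
moment is `log Z(β_p' + γ) - log Z(β_p) - s m`, at most `s` times the gap between the two
secant slopes. Dividing by `N` kills the `log 2` term; averaging over the disorder and letting
`N → ∞` gives the bound with the constant `2` in place of `8`. -/

open Real Finset Topology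

section WeightedAverages

variable {ι : Type*} [Fintype ι]

theorem sum_mul_abs_sub_eq_two_mul_sum_mul_max {w f : ι → ℝ} (hw : ∑ i, w i = 1) :
    ∑ i, w i * |f i - ∑ j, w j * f j| = 2 * ∑ i, w i * max (f i - ∑ j, w j * f j) 0 := by
  set m := ∑ j, w j * f j
  have hcentered : ∑ i, w i * (f i - m) = 0 := by
    simp only [mul_sub, sum_sub_distrib, ← sum_mul, hw, one_mul, m, sub_self]
  have habs : ∀ y : ℝ, |y| = 2 * max y 0 - y := fun y => by
    rcases le_total y 0 with hy | hy
    · rw [abs_of_nonpos hy, max_eq_right hy]; ring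
    · rw [abs_of_nonneg hy, max_eq_left hy]; ring
  calc ∑ i, w i * |f i - m| = ∑ i, (2 * (w i * max (f i - m) 0) - w i * (f i - m)) :=
        sum_congr rfl fun i _ => by rw [habs]; ring
    _ = 2 * ∑ i, w i * max (f i - m) 0 := by
        rw [sum_sub_distrib, hcentered, mul_sum, sub_zero]

theorem max_le_log_one_add_exp (y : ℝ) : max y 0 ≤ log (1 + exp y) :=
  max_le ((le_log_iff_exp_le (by positivity)).2 (by linarith [exp_pos y]))
    (log_nonneg (by linarith [exp_pos y]))

theorem log_one_add_exp_le (y : ℝ) : log (1 + exp y) ≤ log 2 + max y 0 := by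
  rw [← log_exp (max y 0), ← log_mul two_ne_zero (exp_pos _).ne']
  refine log_le_log (by positivity) ?_
  have h1 : 1 ≤ exp (max y 0) := one_le_exp (le_max_right _ _)
  have h2 : exp y ≤ exp (max y 0) := exp_le_exp.2 (le_max_left _ _)
  linarith

theorem exp_sum_mul_le_sum_mul_exp {w f : ι → ℝ} (hw0 : ∀ i, 0 ≤ w i) (hw : ∑ i, w i = 1) :
    exp (∑ i, w i * f i) ≤ ∑ i, w i * exp (f i) := by
  simpa only [smul_eq_mul] using
    convexOn_exp.map_sum_le (fun i _ => hw0 i) hw (fun i _ => Set.mem_univ (f i))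

theorem mul_sum_mul_max_le {w f : ι → ℝ} (hw0 : ∀ i, 0 ≤ w i) (hw : ∑ i, w i = 1) {s : ℝ}
    (hs : 0 ≤ s) :
    s * ∑ i, w i * max (f i) 0 ≤ log 2 + max (log (∑ i, w i * exp (s * f i))) 0 := by
  set R := ∑ i, w i * exp (s * f i)
  have hR : 0 < R := (exp_pos _).trans_le (exp_sum_mul_le_sum_mul_exp hw0 hw)
  have hjensen :
      ∑ i, w i * log (1 + exp (s * f i)) ≤ log (∑ i, w i * (1 + exp (s * f i))) := by
    simpa only [smul_eq_mul] using strictConcaveOn_log_Ioi.concaveOn.le_map_sum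
      (fun i _ => hw0 i) hw (fun i _ => Set.mem_Ioi.2 (by positivity))
  have hsum : ∑ i, w i * (1 + exp (s * f i)) = 1 + R := by
    simp only [mul_one_add, sum_add_distrib, hw, R]
  calc s * ∑ i, w i * max (f i) 0 = ∑ i, w i * max (s * f i) 0 := by
        rw [mul_sum]
        exact sum_congr rfl fun i _ => by rw [mul_left_comm, mul_max_of_nonneg _ _ hs, mul_zero]
    _ ≤ ∑ i, w i * log (1 + exp (s * f i)) :=
        sum_le_sum fun i _ => mul_le_mul_of_nonneg_left (max_le_log_one_add_exp _) (hw0 i)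
    _ ≤ log (1 + exp (log R)) := by rwa [exp_log hR, ← hsum]
    _ ≤ log 2 + max (log R) 0 := log_one_add_exp_le _

end WeightedAverages

section SecantGap

noncomputable def secantGap (L : ℝ → ℝ) (x b γ : ℝ) : ℝ :=
  (L (b + γ) - L b) / γ - (L x - L (x - γ)) / γ

theorem secantGap_const_mul (c : ℝ) (L : ℝ → ℝ) (x b γ : ℝ) :
    secantGap (fun t => c * L t) x b γ = c * secantGap L x b γ := by
  simp only [secantGap]; ring

theorem Filter.Tendsto.secantGap {α : Type*} {l : Filter α} {L : α → ℝ → ℝ} {P : ℝ → ℝ}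
    {x b γ : ℝ}
    (hL : ∀ t ∈ ({x - γ, x, b, b + γ} : Set ℝ), Tendsto (fun n => L n t) l (𝓝 (P t))) :
    Tendsto (fun n => secantGap (L n) x b γ) l (𝓝 (secantGap P x b γ)) :=
  (((hL _ (by simp)).sub (hL _ (by simp))).div_const γ).sub
    (((hL _ (by simp)).sub (hL _ (by simp))).div_const γ)

variable {Ω : Type*} [MeasurableSpace Ω] {μ : Measure Ω} {L : ℝ → Ω → ℝ}

theorem integrable_secantGap (hL : ∀ t, Integrable (L t) μ) (x b γ : ℝ) :
    Integrable (fun ω => secantGap (fun t => L t ω) x b γ) μ :=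
  (((hL _).sub (hL _)).div_const γ).sub (((hL _).sub (hL _)).div_const γ)

theorem integral_secantGap (hL : ∀ t, Integrable (L t) μ) (x b γ : ℝ) :
    ∫ ω, secantGap (fun t => L t ω) x b γ ∂μ = secantGap (fun t => ∫ ω, L t ω ∂μ) x b γ := by
  have hright : Integrable (fun ω => (L (b + γ) ω - L b ω) / γ) μ :=
    ((hL _).sub (hL _)).div_const γ
  have hleft : Integrable (fun ω => (L x ω - L (x - γ) ω) / γ) μ :=
    ((hL _).sub (hL _)).div_const γ
  simp only [secantGap]
  rw [integral_sub hright hleft, integral_div, integral_div, integral_sub (hL _) (hL _),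
    integral_sub (hL _) (hL _)]

end SecantGap

section GibbsFamily

variable {ι : Type*} [Fintype ι] (H A : ι → ℝ)

noncomputable def partitionFn (t : ℝ) : ℝ := ∑ i, exp (t * H i + A i)

noncomputable def gibbsWeight (t : ℝ) (i : ι) : ℝ := exp (t * H i + A i) / partitionFn H A t

noncomputable def gibbsMean (t : ℝ) : ℝ := ∑ i, gibbsWeight H A t i * H i

theorem gibbsWeight_nonneg (t : ℝ) (i : ι) : 0 ≤ gibbsWeight H A t i :=
  div_nonneg (exp_pos _).le (sum_nonneg fun _ _ => (exp_pos _).le)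

theorem sum_gibbsWeight_mul_exp (t s : ℝ) :
    ∑ i, gibbsWeight H A t i * exp (s * H i) = partitionFn H A (t + s) / partitionFn H A t := by
  simp only [gibbsWeight, div_mul_eq_mul_div, ← exp_add, ← sum_div, partitionFn]
  congr 1
  exact sum_congr rfl fun i _ => by ring_nf

variable [Nonempty ι]

theorem partitionFn_pos (t : ℝ) : 0 < partitionFn H A t :=
  sum_pos (fun _ _ => exp_pos _) univ_nonempty

theorem sum_gibbsWeight (t : ℝ) : ∑ i, gibbsWeight H A t i = 1 := by
  simp only [gibbsWeight, ← sum_div]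
  exact div_self (partitionFn_pos H A t).ne'

/-- Jensen for `exp` under the Gibbs weights: this is the tangent line inequality of the convex
function `t ↦ log (partitionFn H A t)`, whose derivative is `gibbsMean H A t`. -/
theorem log_partitionFn_add_mul_gibbsMean_le (t s : ℝ) :
    log (partitionFn H A t) + s * gibbsMean H A t ≤ log (partitionFn H A (t + s)) := by
  have hjensen := exp_sum_mul_le_sum_mul_exp (f := fun i => s * H i)
    (gibbsWeight_nonneg H A t) (sum_gibbsWeight H A t)
  have hmean : ∑ i, gibbsWeight H A t i * (s * H i) = s * gibbsMean H A t := by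
    rw [gibbsMean, mul_sum]
    exact sum_congr rfl fun i _ => by ring
  rw [hmean, sum_gibbsWeight_mul_exp, le_div_iff₀ (partitionFn_pos H A t)] at hjensen
  have hlog := log_le_log (by positivity [partitionFn_pos H A t]) hjensen
  rwa [log_mul (exp_pos _).ne' (partitionFn_pos H A t).ne', log_exp, add_comm] at hlog

theorem gibbsMean_mono {t u : ℝ} (htu : t ≤ u) : gibbsMean H A t ≤ gibbsMean H A u := by
  rcases htu.eq_or_lt with rfl | htu
  · rfl
  have hforward := log_partitionFn_add_mul_gibbsMean_le H A t (u - t)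
  have hbackward := log_partitionFn_add_mul_gibbsMean_le H A u (t - u)
  rw [add_sub_cancel] at hforward hbackward
  have hprod : 0 ≤ (u - t) * (gibbsMean H A u - gibbsMean H A t) := by linarith
  exact sub_nonneg.1 (nonneg_of_mul_nonneg_right hprod (sub_pos.2 htu))

theorem secant_le_gibbsMean (x : ℝ) {γ : ℝ} (hγ : 0 < γ) :
    (log (partitionFn H A x) - log (partitionFn H A (x - γ))) / γ ≤ gibbsMean H A x := by
  have h := log_partitionFn_add_mul_gibbsMean_le H A x (-γ)
  rw [← sub_eq_add_neg] at h
  rw [div_le_iff₀ hγ]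
  linarith

theorem gibbsMean_le_secant (b : ℝ) {γ : ℝ} (hγ : 0 < γ) :
    gibbsMean H A b ≤ (log (partitionFn H A (b + γ)) - log (partitionFn H A b)) / γ := by
  have h := log_partitionFn_add_mul_gibbsMean_le H A b γ
  rw [le_div_iff₀ hγ]
  linarith

theorem secantGap_log_partitionFn_nonneg {x b γ : ℝ} (hγ : 0 < γ) (hxb : x ≤ b) :
    0 ≤ secantGap (fun t => log (partitionFn H A t)) x b γ :=
  sub_nonneg.2 <| (secant_le_gibbsMean H A x hγ).trans <|
    (gibbsMean_mono H A hxb).trans (gibbsMean_le_secant H A b hγ)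

theorem log_sum_gibbsWeight_mul_exp_le {x b γ : ℝ} (hγ : 0 < γ) (hxb : x ≤ b) :
    log (∑ i, gibbsWeight H A x i * exp ((b + γ - x) * (H i - gibbsMean H A x))) ≤
      (b + γ - x) * secantGap (fun t => log (partitionFn H A t)) x b γ := by
  have hleft := secant_le_gibbsMean H A x hγ
  have hright := gibbsMean_le_secant H A b hγ
  have hback := log_partitionFn_add_mul_gibbsMean_le H A b (x - b)
  rw [add_sub_cancel] at hback
  set L : ℝ → ℝ := fun t => log (partitionFn H A t)
  set m := gibbsMean H A x
  set R₀ := (L x - L (x - γ)) / γ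
  set R₁ := (L (b + γ) - L b) / γ
  set s := b + γ - x with hs_def
  have hs : 0 < s := by linarith
  have hγR₁ : γ * R₁ = L (b + γ) - L b := mul_div_cancel₀ _ hγ.ne'
  have hfactor : ∑ i, gibbsWeight H A x i * exp (s * (H i - m))
      = exp (-(s * m)) * (partitionFn H A (b + γ) / partitionFn H A x) := by
    rw [show b + γ = x + s by rw [hs_def]; ring, ← sum_gibbsWeight_mul_exp, mul_sum]
    exact sum_congr rfl fun i _ => by rw [mul_sub, sub_eq_add_neg, exp_add]; ring
  calc log (∑ i, gibbsWeight H A x i * exp (s * (H i - m)))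
      = L (b + γ) - L x - s * m := by
        rw [hfactor, log_mul (exp_pos _).ne' (div_pos (partitionFn_pos H A _)
          (partitionFn_pos H A x)).ne', log_exp, log_div (partitionFn_pos H A _).ne'
          (partitionFn_pos H A x).ne']
        ring
    _ ≤ (L (b + γ) - L b) + (b - x) * gibbsMean H A b - s * R₀ := by
        linarith [mul_le_mul_of_nonneg_left hleft hs.le]
    _ ≤ γ * R₁ + (b - x) * R₁ - s * R₀ := by
        linarith [mul_le_mul_of_nonneg_left hright (sub_nonneg.2 hxb)]
    _ = s * secantGap L x b γ := by rw [hs_def]; simp only [secantGap]; ring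

theorem sum_gibbsWeight_mul_abs_sub_gibbsMean_le {x b γ : ℝ} (hγ : 0 < γ) (hxb : x ≤ b) :
    ∑ i, gibbsWeight H A x i * |H i - gibbsMean H A x| ≤
      2 * secantGap (fun t => log (partitionFn H A t)) x b γ + 2 * log 2 / (b + γ - x) := by
  set m := gibbsMean H A x
  set gap := secantGap (fun t => log (partitionFn H A t)) x b γ
  set s := b + γ - x
  have hs : 0 < s := by simp only [s]; linarith
  have hmoment : max (log (∑ i, gibbsWeight H A x i * exp (s * (H i - m)))) 0 ≤ s * gap :=
    max_le (log_sum_gibbsWeight_mul_exp_le H A hγ hxb)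
      (mul_nonneg hs.le (secantGap_log_partitionFn_nonneg H A hγ hxb))
  have hpos := mul_sum_mul_max_le (f := fun i => H i - m) (gibbsWeight_nonneg H A x)
    (sum_gibbsWeight H A x) hs.le
  have hpos' : ∑ i, gibbsWeight H A x i * max (H i - m) 0 ≤ gap + log 2 / s := by
    rw [← mul_le_mul_iff_right₀ hs, mul_add, mul_div_cancel₀ _ hs.ne']
    linarith
  have habs : ∑ i, gibbsWeight H A x i * |H i - m| =
      2 * ∑ i, gibbsWeight H A x i * max (H i - m) 0 :=
    sum_mul_abs_sub_eq_two_mul_sum_mul_max (sum_gibbsWeight H A x)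
  rw [habs, mul_div_assoc]
  linarith

end GibbsFamily

theorem finsum_update_mul {α M : Type*} [DecidableEq α] [Semiring M] {f : α → M}
    (hf : f.support.Finite) (a : α) (t : M) (c : α → M) :
    ∑ᶠ q, Function.update f a t q * c q = t * c a + ∑ᶠ q, Function.update f a 0 q * c q := by
  have hsplit : ∀ q, Function.update f a t q * c q
      = (Pi.single a t : α → M) q * c q + Function.update f a 0 q * c q := fun q => by
    rcases eq_or_ne q a with rfl | hq <;> simp [*]
  have hsingle : (Function.support fun q => (Pi.single a t : α → M) q * c q).Finite :=
    (Set.finite_singleton a).subset <|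
      (Function.support_mul_subset_left _ _).trans Pi.support_single_subset
  have hrest : (Function.support fun q => Function.update f a 0 q * c q).Finite :=
    hf.subset <| (Function.support_mul_subset_left _ _).trans <| by
      rw [Function.support_update_zero]; exact Set.sdiff_subset
  rw [finsum_congr hsplit, finsum_add_distrib hsingle hrest,
    finsum_eq_single _ a fun q hq => by simp [hq]]
  simp

section SpinGlass

variable {Ω : Type*} {N : ℕ}

/-- The Boltzmann weight with coefficient `t` in front of `H_p` is `exp (t * H_p + restEnergy)`. -/
noncomputable def restEnergy (p : ℕ) (β : ℕ → ℝ) (h : ℝ)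
    (g : (q : ℕ) → (Fin q → Fin N) → Ω → ℝ) (σ : Config N) (ω : Ω) : ℝ :=
  (∑ᶠ q, Function.update β p 0 q * Hp N q (g q) σ ω) + h * ∑ i, spin (σ i)

variable {p : ℕ} {β : ℕ → ℝ} {h : ℝ} {g : (q : ℕ) → (Fin q → Fin N) → Ω → ℝ}

theorem Zpart_update_eq_partitionFn (hβ : β.support.Finite) (t : ℝ) (ω : Ω) :
    Zpart N (Function.update β p t) h g ω =
      partitionFn (fun σ => Hp N p (g p) σ ω) (fun σ => restEnergy p β h g σ ω) t := by
  refine sum_congr rfl fun σ _ => ?_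
  beta_reduce
  rw [weight, finsum_update_mul hβ, restEnergy, add_assoc]

theorem gibbs_eq_gibbsWeight (hβ : β.support.Finite) (σ : Config N) (ω : Ω) :
    gibbs N β h g σ ω =
      gibbsWeight (fun σ => Hp N p (g p) σ ω) (fun σ => restEnergy p β h g σ ω) (β p) σ := by
  conv_lhs => rw [← Function.update_eq_self p β]
  rw [gibbs, Zpart_update_eq_partitionFn hβ, gibbsWeight, weight, finsum_update_mul hβ,
    restEnergy, add_assoc]

theorem gibbs_nonneg (σ : Config N) (ω : Ω) : 0 ≤ gibbs N β h g σ ω :=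
  div_nonneg (exp_pos _).le (sum_nonneg fun _ _ => (exp_pos _).le)

theorem gibbsAvg_one (f : Config N → Ω → ℝ) (ω : Ω) :
    gibbsAvg N β h g 1 (fun σs ω' => f (σs 0) ω') ω = ∑ σ, gibbs N β h g σ ω * f σ ω := by
  rw [gibbsAvg, ← (Equiv.funUnique (Fin 1) (Config N)).symm.sum_comp]
  exact sum_congr rfl fun σ _ => by simp [mul_comm]

theorem gibbsAvg_nonneg {n : ℕ} {f : (Fin n → Config N) → Ω → ℝ} {ω : Ω}
    (hf : ∀ σs, 0 ≤ f σs ω) : 0 ≤ gibbsAvg N β h g n f ω :=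
  sum_nonneg fun σs _ => mul_nonneg (hf σs) (prod_nonneg fun _ _ => gibbs_nonneg _ _)

theorem gibbsAvg_abs_sub_gibbsAvg_le (hβ : β.support.Finite) {b γ : ℝ} (hγ : 0 < γ)
    (hb : β p ≤ b) (ω : Ω) :
    (N : ℝ)⁻¹ * gibbsAvg N β h g 1 (fun σs ω' => |Hp N p (g p) (σs 0) ω' -
        gibbsAvg N β h g 1 (fun τs ω'' => Hp N p (g p) (τs 0) ω'') ω'|) ω ≤
      2 * secantGap (fun t => psiFE N (Function.update β p t) h g ω) (β p) b γ +
        (N : ℝ)⁻¹ * (2 * log 2 / (b + γ - β p)) := by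
  have hgibbs := sum_gibbsWeight_mul_abs_sub_gibbsMean_le (fun σ => Hp N p (g p) σ ω)
    (fun σ => restEnergy p β h g σ ω) hγ hb
  simp only [← Zpart_update_eq_partitionFn hβ, gibbsMean, ← gibbs_eq_gibbsWeight hβ] at hgibbs
  simp only [gibbsAvg_one (fun σ ω' => Hp N p (g p) σ ω'), gibbsAvg_one (fun σ ω' =>
    |Hp N p (g p) σ ω' - ∑ τ, gibbs N β h g τ ω' * Hp N p (g p) τ ω'|), psiFE,
    secantGap_const_mul]
  linarith [mul_le_mul_of_nonneg_left hgibbs (inv_nonneg.2 (Nat.cast_nonneg N))]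

end SpinGlass

section Integrability

variable {Ω : Type*} [MeasurableSpace Ω] {μ : Measure Ω}

theorem integrable_of_map_eq_gaussianReal {X : Ω → ℝ} (hX : Measurable X) {m : ℝ}
    {v : NNReal} (hmap : μ.map X = gaussianReal m v) : Integrable X μ := by
  have hid : Integrable id (μ.map X) := by
    rw [hmap]; exact (memLp_id_gaussianReal 1).integrable le_rfl
  exact hid.comp_measurable hX

theorem abs_log_sum_exp_le {ι : Type*} [Fintype ι] [Nonempty ι] (E : ι → ℝ) :
    |log (∑ i, exp (E i))| ≤ log (Fintype.card ι) + ∑ i, |E i| := by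
  set B := ∑ i, |E i|
  have hEB : ∀ i, |E i| ≤ B := fun i => single_le_sum (fun j _ => abs_nonneg (E j)) (mem_univ i)
  have hZ : 0 < ∑ i, exp (E i) := sum_pos (fun _ _ => exp_pos _) univ_nonempty
  have hcard : (1 : ℝ) ≤ Fintype.card ι := by exact_mod_cast Fintype.card_pos
  obtain ⟨i₀⟩ := ‹Nonempty ι›
  have hlower : exp (-B) ≤ ∑ i, exp (E i) :=
    (exp_le_exp.2 (neg_le_of_abs_le (hEB i₀))).trans
      (single_le_sum (fun j _ => (exp_pos (E j)).le) (mem_univ i₀))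
  have hupper : ∑ i, exp (E i) ≤ Fintype.card ι * exp B := by
    rw [← nsmul_eq_mul, ← card_univ, ← sum_const]
    exact sum_le_sum fun i _ => exp_le_exp.2 ((le_abs_self _).trans (hEB i))
  have hlog_lower := log_le_log (exp_pos _) hlower
  have hlog_upper := log_le_log hZ hupper
  rw [log_exp] at hlog_lower
  rw [log_mul (by positivity) (exp_pos _).ne', log_exp] at hlog_upper
  rw [abs_le]
  constructor <;> linarith [log_nonneg hcard]

theorem integrable_log_sum_exp [IsFiniteMeasure μ] {ι : Type*} [Fintype ι] [Nonempty ι]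
    {E : ι → Ω → ℝ} (hE : ∀ i, Integrable (E i) μ) :
    Integrable (fun ω => log (∑ i, exp (E i ω))) μ := by
  have hmeas : AEMeasurable (fun ω => log (∑ i, exp (E i ω))) μ :=
    (Finset.aemeasurable_fun_sum _ fun i _ => (hE i).aemeasurable.exp).log
  have hbound : Integrable (fun ω => log (Fintype.card ι) + ∑ i, |E i ω|) μ :=
    (integrable_const _).add (integrable_finsetSum _ fun i _ => (hE i).abs)
  refine hbound.mono' hmeas.aestronglyMeasurable (ae_of_all _ fun ω => ?_)
  simpa only [norm_eq_abs] using abs_log_sum_exp_le fun i => E i ω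

variable {N : ℕ} {g : (q : ℕ) → (Fin q → Fin N) → Ω → ℝ}

theorem IsGaussianDisorder.integrable_Hp (hg : IsGaussianDisorder N g μ) (q : ℕ)
    (σ : Config N) : Integrable (fun ω => Hp N q (g q) σ ω) μ :=
  (integrable_finsetSum _ fun i _ =>
    (integrable_of_map_eq_gaussianReal (hg.1 q i) (hg.2.1 q i)).mul_const _).const_mul _

theorem IsGaussianDisorder.integrable_restEnergy [IsFiniteMeasure μ]
    (hg : IsGaussianDisorder N g μ) {β : ℕ → ℝ} (hβ : β.support.Finite) (p : ℕ) (h : ℝ)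
    (σ : Config N) : Integrable (fun ω => restEnergy p β h g σ ω) μ := by
  have hsupp : ∀ ω, (Function.support fun q => Function.update β p 0 q * Hp N q (g q) σ ω) ⊆
      hβ.toFinset := fun ω => (Function.support_mul_subset_left _ _).trans <| by
    rw [Function.support_update_zero, Set.Finite.coe_toFinset]; exact Set.sdiff_subset
  simp only [restEnergy, finsum_eq_sum_of_support_subset _ (hsupp _)]
  exact (integrable_finsetSum _ fun q _ => (hg.integrable_Hp q σ).const_mul _).add
    (integrable_const _)

theorem IsGaussianDisorder.integrable_psiFE_update [IsFiniteMeasure μ]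
    (hg : IsGaussianDisorder N g μ) {β : ℕ → ℝ} (hβ : β.support.Finite) (p : ℕ) (h t : ℝ) :
    Integrable (psiFE N (Function.update β p t) h g) μ := by
  unfold psiFE
  simp only [Zpart_update_eq_partitionFn hβ, partitionFn]
  exact (integrable_log_sum_exp fun σ => ((hg.integrable_Hp p σ).const_mul t).add
    (hg.integrable_restEnergy hβ p h σ)).const_mul _

end Integrability

section Expectation

variable {Ω : Type*} [MeasurableSpace Ω] {μ : Measure Ω} [IsProbabilityMeasure μ] {N p : ℕ}
  {β : ℕ → ℝ} {h : ℝ} {g : (q : ℕ) → (Fin q → Fin N) → Ω → ℝ}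

theorem secantGap_integral_psiFE_nonneg (hβ : β.support.Finite) {b γ : ℝ} (hγ : 0 < γ)
    (hb : β p ≤ b) (hg : IsGaussianDisorder N g μ) :
    0 ≤ secantGap (fun t => ∫ ω, psiFE N (Function.update β p t) h g ω ∂μ) (β p) b γ := by
  rw [← integral_secantGap fun t => hg.integrable_psiFE_update hβ p h t]
  refine integral_nonneg fun ω => ?_
  simp only [psiFE, secantGap_const_mul, Zpart_update_eq_partitionFn hβ]
  exact mul_nonneg (by positivity) (secantGap_log_partitionFn_nonneg _ _ hγ hb)

theorem integral_gibbsAvg_abs_sub_gibbsAvg_le (hβ : β.support.Finite) {b γ : ℝ} (hγ : 0 < γ)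
    (hb : β p ≤ b) (hg : IsGaussianDisorder N g μ) :
    (N : ℝ)⁻¹ * ∫ ω, gibbsAvg N β h g 1 (fun σs ω' => |Hp N p (g p) (σs 0) ω' -
        gibbsAvg N β h g 1 (fun τs ω'' => Hp N p (g p) (τs 0) ω'') ω'|) ω ∂μ ≤
      2 * secantGap (fun t => ∫ ω, psiFE N (Function.update β p t) h g ω ∂μ) (β p) b γ +
        (N : ℝ)⁻¹ * (2 * log 2 / (b + γ - β p)) := by
  have hψ : ∀ t, Integrable (psiFE N (Function.update β p t) h g) μ :=
    fun t => hg.integrable_psiFE_update hβ p h t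
  set c := 2 * log 2 / (b + γ - β p)
  set gap : Ω → ℝ := fun ω =>
    secantGap (fun t => psiFE N (Function.update β p t) h g ω) (β p) b γ
  have hbound : Integrable (fun ω => 2 * gap ω + (N : ℝ)⁻¹ * c) μ :=
    ((integrable_secantGap hψ (β p) b γ).const_mul 2).add (integrable_const _)
  have hmono := integral_mono_of_nonneg
    (ae_of_all μ fun ω => mul_nonneg (inv_nonneg.2 (Nat.cast_nonneg N))
      (gibbsAvg_nonneg (β := β) (h := h) (g := g) (ω := ω) fun _ => abs_nonneg _))
    hbound (ae_of_all μ (gibbsAvg_abs_sub_gibbsAvg_le hβ hγ hb))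
  rwa [integral_const_mul, integral_add ((integrable_secantGap hψ (β p) b γ).const_mul 2)
    (integrable_const _), integral_const_mul, integral_const, probReal_univ, one_smul,
    integral_secantGap hψ] at hmono

end Expectation

theorem statement10_general {Ω : Type*} [MeasurableSpace Ω] (μ : Measure Ω) [IsProbabilityMeasure μ]
    (p : ℕ) (β : ℕ → ℝ) (hβ : (Function.support β).Finite) (h : ℝ)
    (g : (N : ℕ) → (q : ℕ) → (Fin q → Fin N) → Ω → ℝ)
    (hg : ∀ N, IsGaussianDisorder N (g N) μ)
    (βp' γ : ℝ) (hβp' : β p < βp') (hγ : 0 < γ)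
    (P : ℝ → ℝ)
    (hP : ∀ x ∈ ({β p - γ, β p, βp', βp' + γ} : Set ℝ),
      Tendsto (fun N => ∫ ω, psiFE N (Function.update β p x) h (g N) ω ∂μ)
        atTop (nhds (P x))) :
    Filter.limsup (fun N : ℕ => (N : ℝ)⁻¹ * ∫ ω, gibbsAvg N β h (g N) 1
        (fun σs ω' => |Hp N p (g N p) (σs 0) ω' -
          gibbsAvg N β h (g N) 1 (fun τs ω'' => Hp N p (g N p) (τs 0) ω'') ω'|) ω ∂μ)
      atTop ≤ 8 * ((P (βp' + γ) - P βp') / γ - (P (β p) - P (β p - γ)) / γ) := by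
  set c := 2 * log 2 / (βp' + γ - β p)
  set d : ℕ → ℝ := fun N =>
    secantGap (fun t => ∫ ω, psiFE N (Function.update β p t) h (g N) ω ∂μ) (β p) βp' γ
  have hd : Tendsto d atTop (𝓝 (secantGap P (β p) βp' γ)) := Tendsto.secantGap hP
  have hd_nonneg : 0 ≤ secantGap P (β p) βp' γ :=
    ge_of_tendsto' hd fun N => secantGap_integral_psiFE_nonneg hβ hγ hβp'.le (hg N)
  have hbound : Tendsto (fun N : ℕ => 2 * d N + (N : ℝ)⁻¹ * c) atTop
      (𝓝 (2 * secantGap P (β p) βp' γ)) := by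
    simpa using (hd.const_mul 2).add (tendsto_inv_atTop_nhds_zero_nat.mul_const c)
  calc _ ≤ Filter.limsup (fun N : ℕ => 2 * d N + (N : ℝ)⁻¹ * c) atTop :=
        limsup_le_limsup
          (Eventually.of_forall fun N =>
            integral_gibbsAvg_abs_sub_gibbsAvg_le hβ hγ hβp'.le (hg N))
          (isCoboundedUnder_le_of_le atTop fun N => mul_nonneg (by positivity)
            (integral_nonneg fun ω => gibbsAvg_nonneg fun _ => abs_nonneg _))
          hbound.isBoundedUnder_le
    _ = 2 * secantGap P (β p) βp' γ := hbound.limsup_eq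
    _ ≤ 8 * secantGap P (β p) βp' γ := by linarith

/-- If for `x ∈ {β_p − γ, β_p, β_p', β_p' + γ}` the free energy `F_N(x)`
of the model with coefficient `x` replacing `β_p` converges to `P(x)`, then
`limsup_N N⁻¹ E⟨|H_p(σ) − ⟨H_p(σ)⟩|⟩ ≤ 8((P(β_p'+γ) − P(β_p'))/γ − (P(β_p) − P(β_p−γ))/γ)`. -/
theorem statement10 {Ω : Type*} [MeasurableSpace Ω] (μ : Measure Ω) [IsProbabilityMeasure μ]
    (p : ℕ) (hp : 1 ≤ p) (β : ℕ → ℝ) (hβ : (Function.support β).Finite) (h : ℝ)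
    (g : (N : ℕ) → (q : ℕ) → (Fin q → Fin N) → Ω → ℝ)
    (hg : ∀ N, IsGaussianDisorder N (g N) μ)
    (βp' γ : ℝ) (hβp' : β p < βp') (hγ : 0 < γ)
    (P : ℝ → ℝ)
    (hP : ∀ x ∈ ({β p - γ, β p, βp', βp' + γ} : Set ℝ),
      Tendsto (fun N => ∫ ω, psiFE N (Function.update β p x) h (g N) ω ∂μ)
        atTop (nhds (P x))) :
    Filter.limsup (fun N : ℕ => (N : ℝ)⁻¹ * ∫ ω, gibbsAvg N β h (g N) 1
        (fun σs ω' => |Hp N p (g N p) (σs 0) ω' -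
          gibbsAvg N β h (g N) 1 (fun τs ω'' => Hp N p (g N p) (τs 0) ω'') ω'|) ω ∂μ)
      atTop ≤ 8 * ((P (βp' + γ) - P βp') / γ - (P (β p) - P (β p - γ)) / γ) :=
  statement10_general μ p β hβ h g hg βp' γ hβp' hγ P hP
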